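/- arXiv:math/0408278 — 2 statements merged into one kernel-verified Lean document; each statement's English description precedes it below -/
import Mathlib

section
/- Let 1 ≤ p ≤ ∞ and let (u_ε)_{ε∈(0,1]} be a net of smooth functions on ℝ^n such that: (a) for every multi-index α there exists N ∈ ℕ with ‖∂^α u_ε‖_{L^p(ℝ^n)} = O(ε^{-N}) as ε → 0, and (b) for every m ∈ ℕ, ‖u_ε‖_{L^p(ℝ^n)} = O(ε^m) as ε → 0. Then for every multi-index α and every m ∈ ℕ, ‖∂^α u_ε‖_{L^p(ℝ^n)} = O(ε^m) as ε → 0. -/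
open MeasureTheory
open scoped ENNReal

noncomputable section

/-- `P ε` holds for all sufficiently small `ε ∈ (0,1]`. -/
def EvSmall (P : ℝ → Prop) : Prop :=
  ∃ η : ℝ, 0 < η ∧ η ≤ 1 ∧ ∀ ε : ℝ, 0 < ε → ε ≤ η → P ε

/-- Partial derivative in the `i`-th coordinate direction. -/
def pd {n : ℕ} (i : Fin n) (f : (Fin n → ℝ) → ℂ) : (Fin n → ℝ) → ℂ :=
  fun x => fderiv ℝ f x (Pi.single i 1)

/-- Multi-index partial derivative `∂^β`. -/
def pdm {n : ℕ} (β : Fin n → ℕ) (f : (Fin n → ℝ) → ℂ) : (Fin n → ℝ) → ℂ :=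
  (List.finRange n).foldr (fun i g => (pd i)^[β i] g) f

/-- The monomial `x^α`. -/
def monom {n : ℕ} (α : Fin n → ℕ) (x : Fin n → ℝ) : ℝ := ∏ i, (x i) ^ (α i)

/-- A net of (smooth) functions on `ℝ^n` is S-moderate if for all multi-indices `α, β`
there is `N` with `sup_x |x^α ∂^β u_ε(x)| = O(ε^{-N})` as `ε → 0`. -/
def SMod {n : ℕ} (u : ℝ → (Fin n → ℝ) → ℂ) : Prop :=
  ∀ α β : Fin n → ℕ, ∃ N : ℕ, ∃ C : ℝ, EvSmall fun ε =>
    ∀ x, |monom α x| * ‖pdm β (u ε) x‖ ≤ C * ε ^ (-(N : ℤ))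

/-- A net of (smooth) functions on `ℝ^n` is S-negligible if for all multi-indices `α, β`
and every `q ∈ ℕ`, `sup_x |x^α ∂^β u_ε(x)| = O(ε^q)` as `ε → 0`. -/
def SNeg {n : ℕ} (u : ℝ → (Fin n → ℝ) → ℂ) : Prop :=
  ∀ α β : Fin n → ℕ, ∀ q : ℕ, ∃ C : ℝ, EvSmall fun ε =>
    ∀ x, |monom α x| * ‖pdm β (u ε) x‖ ≤ C * ε ^ q

/-- A moderate net of points of `ℝ^n`: `|x_ε| = O(ε^{-N})` for some `N`. -/
def PtMod {n : ℕ} (x : ℝ → Fin n → ℝ) : Prop :=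
  ∃ N : ℕ, ∃ C : ℝ, EvSmall fun ε => ‖x ε‖ ≤ C * ε ^ (-(N : ℤ))


/-! ### Auxiliary development -/

section Aux

variable {n : ℕ}

/-- The `i`-th coordinate direction. -/
def dir {n : ℕ} (i : Fin n) : Fin n → ℝ := Pi.single i 1

lemma pd_smooth {i : Fin n} {f : (Fin n → ℝ) → ℂ} (hf : ContDiff ℝ (⊤ : ℕ∞) f) :
    ContDiff ℝ (⊤ : ℕ∞) (pd i f) :=
  (hf.fderiv_right (by simp)).clm_apply contDiff_const

lemma pd_apply_snd {i j : Fin n} {f : (Fin n → ℝ) → ℂ} (hf : ContDiff ℝ (⊤ : ℕ∞) f) (x : Fin n → ℝ) :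
    pd i (pd j f) x = fderiv ℝ (fderiv ℝ f) x (Pi.single i 1) (Pi.single j 1) := by
  have hdc : DifferentiableAt ℝ (fderiv ℝ f) x :=
    ((hf.fderiv_right (m := (⊤ : ℕ∞)) (by simp)).differentiable (by simp)).differentiableAt
  have : pd j f = fun y => (fderiv ℝ f y) (Pi.single j 1) := rfl
  rw [pd, this]
  rw [fderiv_clm_apply hdc (differentiableAt_const _)]
  simp

lemma pd_comm {i j : Fin n} {f : (Fin n → ℝ) → ℂ} (hf : ContDiff ℝ (⊤ : ℕ∞) f) :
    pd i (pd j f) = pd j (pd i f) := by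
  funext x
  have hsymm : IsSymmSndFDerivAt ℝ f x := (hf.contDiffAt).isSymmSndFDerivAt (by rw [minSmoothness_of_isRCLikeNormedField]; exact WithTop.coe_le_coe.2 le_top)
  rw [pd_apply_snd hf, pd_apply_snd hf, hsymm.eq]

/-- generic fold -/
def Fld (l : List (Fin n)) (β : Fin n → ℕ) (f : (Fin n → ℝ) → ℂ) : (Fin n → ℝ) → ℂ :=
  l.foldr (fun i g => (pd i)^[β i] g) f

lemma pdm_eq_Fld (β : Fin n → ℕ) (f : (Fin n → ℝ) → ℂ) :
    pdm β f = Fld (List.finRange n) β f := rfl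

lemma iter_smooth {j : Fin n} (k : ℕ) {f : (Fin n → ℝ) → ℂ} (hf : ContDiff ℝ (⊤ : ℕ∞) f) :
    ContDiff ℝ (⊤ : ℕ∞) ((pd j)^[k] f) := by
  induction k generalizing f with
  | zero => simpa using hf
  | succ k ih => rw [Function.iterate_succ_apply]; exact ih (pd_smooth hf)

lemma Fld_smooth (l : List (Fin n)) (β : Fin n → ℕ) {f : (Fin n → ℝ) → ℂ}
    (hf : ContDiff ℝ (⊤ : ℕ∞) f) : ContDiff ℝ (⊤ : ℕ∞) (Fld l β f) := by
  induction l with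
  | nil => exact hf
  | cons j t ih => exact iter_smooth _ ih

lemma Fld_congr (l : List (Fin n)) {β γ : Fin n → ℕ} (f : (Fin n → ℝ) → ℂ)
    (h : ∀ j ∈ l, β j = γ j) : Fld l β f = Fld l γ f := by
  induction l with
  | nil => rfl
  | cons j t ih =>
      show (pd j)^[β j] (Fld t β f) = (pd j)^[γ j] (Fld t γ f)
      rw [h j List.mem_cons_self, ih fun a ha => h a (List.mem_cons_of_mem _ ha)]

lemma pd_iter_comm {i j : Fin n} (k : ℕ) {f : (Fin n → ℝ) → ℂ} (hf : ContDiff ℝ (⊤ : ℕ∞) f) :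
    pd i ((pd j)^[k] f) = (pd j)^[k] (pd i f) := by
  induction k generalizing f with
  | zero => rfl
  | succ k ih =>
      rw [Function.iterate_succ_apply, Function.iterate_succ_apply,
        ih (pd_smooth hf), pd_comm hf]

lemma pd_Fld_comm (l : List (Fin n)) {i : Fin n} (β : Fin n → ℕ) {f : (Fin n → ℝ) → ℂ}
    (hf : ContDiff ℝ (⊤ : ℕ∞) f) : pd i (Fld l β f) = Fld l β (pd i f) := by
  induction l generalizing f with
  | nil => rfl
  | cons j t ih =>
      show pd i ((pd j)^[β j] (Fld t β f)) = (pd j)^[β j] (Fld t β (pd i f))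
      rw [pd_iter_comm _ (Fld_smooth t β hf), ih hf]

lemma Fld_cons (j : Fin n) (t : List (Fin n)) (β : Fin n → ℕ) (f : (Fin n → ℝ) → ℂ) :
    Fld (j :: t) β f = (pd j)^[β j] (Fld t β f) := rfl

lemma Fld_add_single (l : List (Fin n)) {i : Fin n} (hnd : l.Nodup) (hmem : i ∈ l)
    (β : Fin n → ℕ) {f : (Fin n → ℝ) → ℂ} (hf : ContDiff ℝ (⊤ : ℕ∞) f) :
    Fld l (β + Pi.single i 1) f = Fld l β (pd i f) := by
  induction l with
  | nil => simp at hmem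
  | cons j t ih =>
      rcases List.nodup_cons.1 hnd with ⟨hjt, hndt⟩
      by_cases hji : j = i
      · subst hji
        rw [Fld_cons, Fld_cons]
        have h1 : Fld t (β + Pi.single j 1) f = Fld t β f :=
          Fld_congr t f fun a ha => by
            have : a ≠ j := fun h => hjt (h ▸ ha)
            simp [Pi.single_apply, this]
        rw [h1]
        have h2 : ((β + Pi.single j 1 : Fin n → ℕ)) j = β j + 1 := by simp [Pi.add_apply]
        rw [h2, Function.iterate_succ_apply, pd_Fld_comm t β hf]
      · have hit : i ∈ t := by
          rcases List.mem_cons.1 hmem with h | h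
          · exact absurd h.symm hji
          · exact h
        rw [Fld_cons, Fld_cons]
        have h2 : ((β + Pi.single i 1 : Fin n → ℕ)) j = β j := by
          simp [Pi.add_apply, Pi.single_apply, Ne.symm hji]
        rw [h2, ih hndt hit]

lemma pdm_add_single {i : Fin n} (β : Fin n → ℕ) {f : (Fin n → ℝ) → ℂ} (hf : ContDiff ℝ (⊤ : ℕ∞) f) :
    pdm (β + Pi.single i 1) f = pdm β (pd i f) :=
  Fld_add_single _ (List.nodup_finRange n) (List.mem_finRange i) β hf

lemma pd_pdm {i : Fin n} (β : Fin n → ℕ) {f : (Fin n → ℝ) → ℂ} (hf : ContDiff ℝ (⊤ : ℕ∞) f) :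
    pd i (pdm β f) = pdm (β + Pi.single i 1) f := by
  rw [pdm_add_single β hf, pdm_eq_Fld, pdm_eq_Fld, pd_Fld_comm _ _ hf]

lemma pdm_smooth (β : Fin n → ℕ) {f : (Fin n → ℝ) → ℂ} (hf : ContDiff ℝ (⊤ : ℕ∞) f) :
    ContDiff ℝ (⊤ : ℕ∞) (pdm β f) := Fld_smooth _ _ hf

lemma pdm_zero {f : (Fin n → ℝ) → ℂ} : pdm (fun _ => 0) f = f := by
  rw [pdm_eq_Fld]
  induction List.finRange n with
  | nil => rfl
  | cons j t ih => exact ih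

/-- Jensen/Hölder: `(∫⁻ f)^P ≤ (μ univ)^(P-1) * ∫⁻ f^P` for `P ≥ 1`. -/
lemma jensen_step {μ : Measure ℝ} {P : ℝ} (hP : 1 ≤ P) {f : ℝ → ℝ≥0∞}
    (hf : AEMeasurable f μ) :
    (∫⁻ s, f s ∂μ) ^ P ≤ (μ Set.univ) ^ (P - 1) * ∫⁻ s, (f s) ^ P ∂μ := by
  rcases eq_or_lt_of_le hP with rfl | hP1
  · simp
  · have hpq : P.HolderConjugate P.conjExponent := Real.HolderConjugate.conjExponent hP1
    set Q := P.conjExponent with hQ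
    have hholder := ENNReal.lintegral_mul_le_Lp_mul_Lq μ hpq hf aemeasurable_const
      (g := fun _ => 1)
    simp only [Pi.mul_apply, mul_one, ENNReal.one_rpow, lintegral_const, one_mul] at hholder
    have hPpos : (0:ℝ) < P := lt_of_lt_of_le one_pos hP
    have key := ENNReal.rpow_le_rpow hholder (le_of_lt hPpos)
    calc (∫⁻ s, f s ∂μ) ^ P
        ≤ ((∫⁻ s, f s ^ P ∂μ) ^ (1/P) * (μ Set.univ) ^ (1/Q)) ^ P := key
      _ = (μ Set.univ) ^ (P - 1) * ∫⁻ s, (f s) ^ P ∂μ := by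
          rw [ENNReal.mul_rpow_of_nonneg _ _ (le_of_lt hPpos), ← ENNReal.rpow_mul,
            ← ENNReal.rpow_mul]
          have e1 : 1/P * P = 1 := by field_simp
          have e2 : 1/Q * P = P - 1 := by
            have h3 : P⁻¹ + Q⁻¹ = 1 := hpq.inv_add_inv_eq_one
            have hQ0 : Q ≠ 0 := hpq.symm.ne_zero
            field_simp
            field_simp at h3
            nlinarith [h3]
          rw [e1, e2, ENNReal.rpow_one, mul_comm]

lemma translate_cont {g : (Fin n → ℝ) → ℂ} (hg : Continuous g) (v : Fin n → ℝ) :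
    Continuous fun q : (Fin n → ℝ) × ℝ => g (q.1 + q.2 • v) :=
  hg.comp (continuous_fst.add (continuous_snd.smul continuous_const))

/-- Minkowski-type bound for the sliding average. -/
lemma mink0 (p : ℝ≥0∞) (hp : 1 ≤ p) {g : (Fin n → ℝ) → ℂ} (hg : Continuous g)
    (v : Fin n → ℝ) {h : ℝ} (hh : 0 < h) :
    eLpNorm (fun x => ∫ s in (0:ℝ)..h, ‖g (x + s • v)‖) p volume
      ≤ ENNReal.ofReal h * eLpNorm g p volume := by
  set I : (Fin n → ℝ) → ℝ := fun x => ∫ s in (0:ℝ)..h, ‖g (x + s • v)‖ with hIdef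
  set J : (Fin n → ℝ) → ℝ≥0∞ := fun x => ∫⁻ s in Set.Ioc (0:ℝ) h, (‖g (x + s • v)‖₊ : ℝ≥0∞)
    with hJdef
  have hconts : ∀ x : Fin n → ℝ, Continuous fun s : ℝ => ‖g (x + s • v)‖ := fun x =>
    (hg.comp (continuous_const.add (continuous_id.smul continuous_const))).norm
  have hInonneg : ∀ x, 0 ≤ I x := fun x =>
    intervalIntegral.integral_nonneg hh.le fun u _ => norm_nonneg _
  have hGm : Measurable fun q : (Fin n → ℝ) × ℝ => (‖g (q.1 + q.2 • v)‖₊ : ℝ≥0∞) :=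
    (translate_cont hg v).nnnorm.measurable.coe_nnreal_ennreal
  have F1 : ∀ x, (‖I x‖₊ : ℝ≥0∞) = J x := by
    intro x
    have e1 : I x = ∫ s in Set.Ioc (0:ℝ) h, ‖g (x + s • v)‖ :=
      intervalIntegral.integral_of_le hh.le
    have hint : Integrable (fun s => ‖g (x + s • v)‖) (volume.restrict (Set.Ioc (0:ℝ) h)) :=
      (hconts x).integrableOn_Ioc
    rw [← enorm_eq_nnnorm, Real.enorm_eq_ofReal (hInonneg x), e1,
      ofReal_integral_eq_lintegral_ofReal hint
        (Filter.Eventually.of_forall fun s => norm_nonneg _)]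
    simp_rw [ofReal_norm_eq_enorm, enorm_eq_nnnorm]
    rfl
  rcases eq_or_ne p ∞ with rfl | hptop
  · rw [eLpNorm_exponent_top, eLpNorm_exponent_top]
    set M := eLpNormEssSup g volume with hM
    have hae : ∀ᵐ y : (Fin n → ℝ) ∂volume, (‖g y‖₊ : ℝ≥0∞) ≤ M := ae_le_eLpNormEssSup
    have hEm : MeasurableSet {q : (Fin n → ℝ) × ℝ | M < (‖g (q.1 + q.2 • v)‖₊ : ℝ≥0∞)} :=
      measurableSet_lt measurable_const hGm
    have hprod : (volume.prod volume) {q : (Fin n → ℝ) × ℝ |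
        M < (‖g (q.1 + q.2 • v)‖₊ : ℝ≥0∞)} = 0 := by
      rw [Measure.prod_apply_symm hEm]
      have hz : ∀ s : ℝ, volume ((fun x : Fin n → ℝ => (x, s)) ⁻¹'
          {q : (Fin n → ℝ) × ℝ | M < (‖g (q.1 + q.2 • v)‖₊ : ℝ≥0∞)}) = 0 := by
        intro s
        have e2 : ((fun x : Fin n → ℝ => (x, s)) ⁻¹'
            {q : (Fin n → ℝ) × ℝ | M < (‖g (q.1 + q.2 • v)‖₊ : ℝ≥0∞)})
            = (fun x : Fin n → ℝ => x + s • v) ⁻¹' {y | M < (‖g y‖₊ : ℝ≥0∞)} := rfl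
        rw [e2, measure_preimage_add_right]
        have := hae
        rw [Filter.eventually_iff, mem_ae_iff] at this
        convert this using 2
        ext y
        simp [not_le]
      simp only [hz, lintegral_zero]
    have hxs : ∀ᵐ x : (Fin n → ℝ) ∂volume, ∀ᵐ s : ℝ ∂volume,
        (‖g (x + s • v)‖₊ : ℝ≥0∞) ≤ M := by
      have : ∀ᵐ q : (Fin n → ℝ) × ℝ ∂(volume.prod volume),
          (‖g (q.1 + q.2 • v)‖₊ : ℝ≥0∞) ≤ M := by
        rw [Filter.eventually_iff, mem_ae_iff]
        convert hprod using 2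
        ext q
        simp [not_le]
      exact Measure.ae_ae_of_ae_prod this
    have hx : ∀ᵐ x : (Fin n → ℝ) ∂volume, (‖I x‖₊ : ℝ≥0∞) ≤ ENNReal.ofReal h * M := by
      filter_upwards [hxs] with x hxae
      rw [F1]
      calc J x ≤ ∫⁻ _ in Set.Ioc (0:ℝ) h, M := lintegral_mono_ae (ae_restrict_of_ae hxae)
        _ = M * ENNReal.ofReal h := by rw [setLIntegral_const, Real.volume_Ioc, sub_zero]
        _ = ENNReal.ofReal h * M := mul_comm _ _
    exact essSup_le_of_ae_le _ hx
  · have hp0 : p ≠ 0 := by intro h0; rw [h0] at hp; simp at hp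
    set P := p.toReal with hP
    have hP1 : 1 ≤ P := by simpa using ENNReal.toReal_mono hptop hp
    have hPpos : (0:ℝ) < P := lt_of_lt_of_le one_pos hP1
    rw [eLpNorm_eq_lintegral_rpow_enorm_toReal hp0 hptop, eLpNorm_eq_lintegral_rpow_enorm_toReal hp0 hptop]
    have hpt : ∀ x, (‖I x‖₊ : ℝ≥0∞) ^ P ≤ (ENNReal.ofReal h) ^ (P - 1) *
        ∫⁻ s in Set.Ioc (0:ℝ) h, (‖g (x + s • v)‖₊ : ℝ≥0∞) ^ P := by
      intro x
      rw [F1]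
      have hfmeas : AEMeasurable (fun s : ℝ => (‖g (x + s • v)‖₊ : ℝ≥0∞))
          (volume.restrict (Set.Ioc (0:ℝ) h)) :=
        (((hg.comp (continuous_const.add
          (continuous_id.smul continuous_const))).nnnorm).measurable.coe_nnreal_ennreal).aemeasurable
      have := jensen_step hP1 hfmeas
      have hres : (volume.restrict (Set.Ioc (0:ℝ) h)) Set.univ = ENNReal.ofReal h := by
        rw [Measure.restrict_apply MeasurableSet.univ, Set.univ_inter, Real.volume_Ioc, sub_zero]
      rwa [hres] at this
    have hswap : ∫⁻ x, ∫⁻ s in Set.Ioc (0:ℝ) h, (‖g (x + s • v)‖₊ : ℝ≥0∞) ^ P ∂volume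
        = ∫⁻ s in Set.Ioc (0:ℝ) h, ∫⁻ x, (‖g (x + s • v)‖₊ : ℝ≥0∞) ^ P ∂volume := by
      apply lintegral_lintegral_swap
      exact ((hGm.pow_const P).aemeasurable)
    have htrans : ∀ s : ℝ, ∫⁻ x, (‖g (x + s • v)‖₊ : ℝ≥0∞) ^ P ∂volume
        = ∫⁻ x, (‖g x‖₊ : ℝ≥0∞) ^ P ∂volume := fun s =>
      lintegral_add_right_eq_self (fun x => (‖g x‖₊ : ℝ≥0∞) ^ P) (s • v)
    have hmain : ∫⁻ x, (‖I x‖₊ : ℝ≥0∞) ^ P ∂volume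
        ≤ (ENNReal.ofReal h) ^ P * ∫⁻ x, (‖g x‖₊ : ℝ≥0∞) ^ P ∂volume := by
      calc ∫⁻ x, (‖I x‖₊ : ℝ≥0∞) ^ P ∂volume
          ≤ ∫⁻ x, (ENNReal.ofReal h) ^ (P - 1) *
              (∫⁻ s in Set.Ioc (0:ℝ) h, (‖g (x + s • v)‖₊ : ℝ≥0∞) ^ P) ∂volume :=
            lintegral_mono hpt
        _ = (ENNReal.ofReal h) ^ (P - 1) *
              ∫⁻ x, ∫⁻ s in Set.Ioc (0:ℝ) h, (‖g (x + s • v)‖₊ : ℝ≥0∞) ^ P ∂volume :=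
            lintegral_const_mul _ (by
              exact (Measurable.lintegral_prod_right (hGm.pow_const P)))
        _ = (ENNReal.ofReal h) ^ (P - 1) *
              ∫⁻ s in Set.Ioc (0:ℝ) h, ∫⁻ x, (‖g (x + s • v)‖₊ : ℝ≥0∞) ^ P ∂volume := by
            rw [hswap]
        _ = (ENNReal.ofReal h) ^ (P - 1) *
              ((∫⁻ x, (‖g x‖₊ : ℝ≥0∞) ^ P ∂volume) * ENNReal.ofReal h) := by
            simp_rw [htrans]
            rw [setLIntegral_const, Real.volume_Ioc, sub_zero]
        _ = (ENNReal.ofReal h) ^ P * ∫⁻ x, (‖g x‖₊ : ℝ≥0∞) ^ P ∂volume := by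
            have hx0 : ENNReal.ofReal h ≠ 0 := by
              simp [ENNReal.ofReal_eq_zero, not_le, hh]
            have e3 : ENNReal.ofReal h ^ (P - 1) * ENNReal.ofReal h = ENNReal.ofReal h ^ P := by
              nth_rewrite 2 [← ENNReal.rpow_one (ENNReal.ofReal h)]
              rw [← ENNReal.rpow_add _ _ hx0 ENNReal.ofReal_ne_top]
              ring_nf
            rw [mul_comm (∫⁻ x, (‖g x‖₊ : ℝ≥0∞) ^ P ∂volume) (ENNReal.ofReal h),
              ← mul_assoc, e3]
    calc (∫⁻ x, (‖I x‖₊ : ℝ≥0∞) ^ P ∂volume) ^ (1/P)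
        ≤ ((ENNReal.ofReal h) ^ P * ∫⁻ x, (‖g x‖₊ : ℝ≥0∞) ^ P ∂volume) ^ (1/P) :=
          ENNReal.rpow_le_rpow hmain (by positivity)
      _ = ENNReal.ofReal h * (∫⁻ x, (‖g x‖₊ : ℝ≥0∞) ^ P ∂volume) ^ (1/P) := by
          rw [ENNReal.mul_rpow_of_nonneg _ _ (by positivity), ← ENNReal.rpow_mul]
          congr 1
          rw [mul_one_div, div_self (ne_of_gt hPpos), ENNReal.rpow_one]

/-- derivative along the line `s ↦ x + s • e` of a smooth function. -/
lemma hasDerivAt_line {i : Fin n} {u : (Fin n → ℝ) → ℂ} (hu : ContDiff ℝ (⊤ : ℕ∞) u)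
    (x : Fin n → ℝ) (s : ℝ) :
    HasDerivAt (fun t : ℝ => u (x + t • dir i))
      (pd i u (x + s • dir i)) s := by
  have hline : HasDerivAt (fun t : ℝ => x + t • dir i) (dir i) s := by
    have h1 : HasDerivAt (fun t : ℝ => t • dir i)
        ((1:ℝ) • dir i) s := (hasDerivAt_id s).smul_const _
    simpa using h1.const_add x
  have hF : HasFDerivAt u (fderiv ℝ u (x + s • dir i))
      (x + s • dir i) :=
    ((hu.differentiable (by simp)) _).hasFDerivAt
  exact hF.comp_hasDerivAt s hline

/-- Taylor identity with integral remainder. -/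
lemma taylor_bound {i : Fin n} {f : (Fin n → ℝ) → ℂ} (hf : ContDiff ℝ (⊤ : ℕ∞) f)
    (h : ℝ) (x : Fin n → ℝ) :
    f (x + h • dir i) - f x - h • pd i f x
      = ∫ s in (0:ℝ)..h, (h - s) • pd i (pd i f) (x + s • dir i) := by
  have hf1 : ContDiff ℝ (⊤ : ℕ∞) (pd i f) := pd_smooth hf
  have hf2 : ContDiff ℝ (⊤ : ℕ∞) (pd i (pd i f)) := pd_smooth hf1
  set w : ℝ → ℂ := fun s => (h - s) • pd i f (x + s • dir i) + f (x + s • dir i) with hw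
  have hderiv : ∀ s : ℝ, HasDerivAt w ((h - s) • pd i (pd i f) (x + s • dir i)) s := by
    intro s
    have h1 : HasDerivAt (fun t : ℝ => h - t) (-1) s := by
      simpa using (hasDerivAt_id s).const_sub h
    have h2 := hasDerivAt_line (i := i) hf1 x s
    have h3 := hasDerivAt_line (i := i) hf x s
    have h4 := (h1.smul h2).add h3
    have e : ((h - s) • pd i (pd i f) (x + s • dir i) : ℂ) = (h - s) • pd i (pd i f) (x + s • dir i)
        + (-1:ℝ) • pd i f (x + s • dir i) + pd i f (x + s • dir i) := by module
    rw [e]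
    exact h4
  have hcont : Continuous fun s : ℝ => (h - s) • pd i (pd i f) (x + s • dir i) :=
    ((continuous_const.sub continuous_id).smul
      ((hf2.continuous).comp (continuous_const.add (continuous_id.smul continuous_const))))
  have := intervalIntegral.integral_eq_sub_of_hasDerivAt
    (fun s _ => hderiv s) (hcont.intervalIntegrable 0 h)
  rw [this]
  simp only [hw]
  simp
  module

lemma eLpNorm_translate (p : ℝ≥0∞) {g : (Fin n → ℝ) → ℂ} (hg : Continuous g) (c : Fin n → ℝ) :
    eLpNorm (fun x => g (x + c)) p volume = eLpNorm g p volume :=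
  eLpNorm_comp_measurePreserving hg.aestronglyMeasurable (measurePreserving_add_right volume c)

/-- Landau-type inequality. -/
lemma key (p : ℝ≥0∞) (hp : 1 ≤ p) {i : Fin n} {f : (Fin n → ℝ) → ℂ} (hf : ContDiff ℝ (⊤ : ℕ∞) f)
    {h : ℝ} (hh : 0 < h) :
    eLpNorm (pd i f) p volume ≤ ENNReal.ofReal (2 / h) * eLpNorm f p volume
      + ENNReal.ofReal h * eLpNorm (pd i (pd i f)) p volume := by
  have hf1 : ContDiff ℝ (⊤ : ℕ∞) (pd i f) := pd_smooth hf
  have hf2 : ContDiff ℝ (⊤ : ℕ∞) (pd i (pd i f)) := pd_smooth hf1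
  have hcf : Continuous f := hf.continuous
  have hcf2 : Continuous (pd i (pd i f)) := hf2.continuous
  set r : (Fin n → ℝ) → ℂ := fun x => f (x + h • dir i) - f x - h • pd i f x with hr
  have hrc : Continuous r :=
    ((hcf.comp (continuous_id.add continuous_const)).sub hcf).sub
      (hf1.continuous.const_smul h)
  have hrb : ∀ x, ‖r x‖ ≤ h * ∫ s in (0:ℝ)..h, ‖pd i (pd i f) (x + s • dir i)‖ := by
    intro x
    rw [hr]
    simp only
    rw [taylor_bound hf h x]
    calc ‖∫ s in (0:ℝ)..h, (h - s) • pd i (pd i f) (x + s • dir i)‖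
        ≤ ∫ s in (0:ℝ)..h, ‖(h - s) • pd i (pd i f) (x + s • dir i)‖ :=
          intervalIntegral.norm_integral_le_integral_norm hh.le
      _ ≤ ∫ s in (0:ℝ)..h, h * ‖pd i (pd i f) (x + s • dir i)‖ := by
          apply intervalIntegral.integral_mono_on hh.le
          · exact (((continuous_const.sub continuous_id).smul
              (hcf2.comp (continuous_const.add
                (continuous_id.smul continuous_const)))).norm).intervalIntegrable 0 h
          · exact (continuous_const.mul ((hcf2.comp (continuous_const.add
              (continuous_id.smul continuous_const))).norm)).intervalIntegrable 0 h
          · intro s hs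
            rw [norm_smul]
            apply mul_le_mul_of_nonneg_right _ (norm_nonneg _)
            rw [Real.norm_eq_abs, abs_sub_le_iff]
            constructor <;> [linarith [hs.2, hs.1]; linarith [hs.1, hs.2]]
      _ = h * ∫ s in (0:ℝ)..h, ‖pd i (pd i f) (x + s • dir i)‖ := by
          rw [← intervalIntegral.integral_const_mul]
  have hid : pd i f = fun x => h⁻¹ • (f (x + h • dir i) - f x) - h⁻¹ • r x := by
    funext x
    rw [hr]
    simp only
    rw [smul_sub, smul_sub, smul_sub, smul_smul, inv_mul_cancel₀ hh.ne', one_smul]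
    abel
  have hmeas1 : AEStronglyMeasurable (fun x => h⁻¹ • (f (x + h • dir i) - f x)) volume :=
    ((((hcf.comp (continuous_id.add continuous_const)).sub
      hcf)).const_smul h⁻¹).aestronglyMeasurable
  have hmeas2 : AEStronglyMeasurable (fun x => h⁻¹ • r x) volume :=
    (hrc.const_smul h⁻¹).aestronglyMeasurable
  calc eLpNorm (pd i f) p volume
      = eLpNorm ((fun x => h⁻¹ • (f (x + h • dir i) - f x)) - fun x => h⁻¹ • r x) p volume := by
        rw [hid]; rfl
    _ ≤ eLpNorm (fun x => h⁻¹ • (f (x + h • dir i) - f x)) p volume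
        + eLpNorm (fun x => h⁻¹ • r x) p volume := eLpNorm_sub_le hmeas1 hmeas2 hp
    _ ≤ ENNReal.ofReal (2 / h) * eLpNorm f p volume
        + ENNReal.ofReal h * eLpNorm (pd i (pd i f)) p volume := by
        gcongr
        · have e1 : eLpNorm (fun x => h⁻¹ • (f (x + h • dir i) - f x)) p volume
              = (‖h⁻¹‖₊ : ℝ≥0∞) * eLpNorm (fun x => f (x + h • dir i) - f x) p volume :=
            eLpNorm_const_smul h⁻¹ (fun x => f (x + h • dir i) - f x) p volume
          rw [e1]
          have e2 : eLpNorm (fun x => f (x + h • dir i) - f x) p volume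
              ≤ eLpNorm f p volume + eLpNorm f p volume := by
            have tri := eLpNorm_sub_le (p := p) (μ := volume)
              (f := fun x => f (x + h • dir i)) (g := f)
              ((hcf.comp (continuous_id.add continuous_const)).aestronglyMeasurable)
              hcf.aestronglyMeasurable hp
            have e4 : (fun x => f (x + h • dir i) - f x)
                = (fun x => f (x + h • dir i)) - f := rfl
            rw [e4]
            calc eLpNorm ((fun x => f (x + h • dir i)) - f) p volume
                ≤ eLpNorm (fun x => f (x + h • dir i)) p volume + eLpNorm f p volume := tri
              _ = eLpNorm f p volume + eLpNorm f p volume := by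
                  rw [eLpNorm_translate p hcf]
          calc (‖h⁻¹‖₊ : ℝ≥0∞) * eLpNorm (fun x => f (x + h • dir i) - f x) p volume
              ≤ (‖h⁻¹‖₊ : ℝ≥0∞) * (eLpNorm f p volume + eLpNorm f p volume) := by gcongr
            _ = ENNReal.ofReal (2 / h) * eLpNorm f p volume := by
                rw [← two_mul, ← enorm_eq_nnnorm, Real.enorm_eq_ofReal (inv_nonneg.2 hh.le)]
                have e3 : ENNReal.ofReal (2 / h) = 2 * ENNReal.ofReal h⁻¹ := by
                  rw [div_eq_mul_inv, ENNReal.ofReal_mul (by norm_num)]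
                  norm_num
                rw [e3]
                ring
        · have e1 : eLpNorm (fun x => h⁻¹ • r x) p volume
              = (‖h⁻¹‖₊ : ℝ≥0∞) * eLpNorm r p volume := eLpNorm_const_smul h⁻¹ r p volume
          rw [e1, ← enorm_eq_nnnorm, Real.enorm_eq_ofReal (inv_nonneg.2 hh.le)]
          have e2 : eLpNorm r p volume ≤ ENNReal.ofReal h *
              (ENNReal.ofReal h * eLpNorm (pd i (pd i f)) p volume) := by
            calc eLpNorm r p volume
                ≤ eLpNorm (fun x => h * ∫ s in (0:ℝ)..h,
                    ‖pd i (pd i f) (x + s • dir i)‖) p volume := eLpNorm_mono_real hrb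
              _ = (‖h‖₊ : ℝ≥0∞) * eLpNorm (fun x => ∫ s in (0:ℝ)..h,
                    ‖pd i (pd i f) (x + s • dir i)‖) p volume :=
                  eLpNorm_const_smul (c := h) _ _ _
              _ ≤ ENNReal.ofReal h * (ENNReal.ofReal h * eLpNorm (pd i (pd i f)) p volume) := by
                  rw [← enorm_eq_nnnorm, Real.enorm_eq_ofReal hh.le]
                  gcongr
                  exact mink0 p hp hcf2 (dir i) hh
          calc ENNReal.ofReal h⁻¹ * eLpNorm r p volume
              ≤ ENNReal.ofReal h⁻¹ * (ENNReal.ofReal h *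
                  (ENNReal.ofReal h * eLpNorm (pd i (pd i f)) p volume)) := by gcongr
            _ = ENNReal.ofReal h * eLpNorm (pd i (pd i f)) p volume := by
                rw [← mul_assoc, ENNReal.ofReal_inv_of_pos hh, ENNReal.inv_mul_cancel
                  (by simp [ENNReal.ofReal_eq_zero, not_le, hh]) ENNReal.ofReal_ne_top, one_mul]

end Aux

/-- if every `L^p` norm `‖∂^α u_ε‖_p` is `O(ε^{-N})` for some `N`, and
`‖u_ε‖_p = O(ε^m)` for every `m`, then `‖∂^α u_ε‖_p = O(ε^m)` for every `α` and `m`. -/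
theorem stmt1 {n : ℕ} (p : ℝ≥0∞) (hp : 1 ≤ p) (u : ℝ → (Fin n → ℝ) → ℂ)
    (hsmooth : ∀ ε ∈ Set.Ioc (0 : ℝ) 1, ContDiff ℝ (⊤ : ℕ∞) (u ε))
    (hfin : ∀ ε ∈ Set.Ioc (0 : ℝ) 1, ∀ α : Fin n → ℕ,
      eLpNorm (pdm α (u ε)) p volume < ⊤)
    (ha : ∀ α : Fin n → ℕ, ∃ N : ℕ, ∃ C : ℝ, EvSmall fun ε =>
      (eLpNorm (pdm α (u ε)) p volume).toReal ≤ C * ε ^ (-(N : ℤ)))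
    (hb : ∀ m : ℕ, ∃ C : ℝ, EvSmall fun ε =>
      (eLpNorm (u ε) p volume).toReal ≤ C * ε ^ m) :
    ∀ α : Fin n → ℕ, ∀ m : ℕ, ∃ C : ℝ, EvSmall fun ε =>
      (eLpNorm (pdm α (u ε)) p volume).toReal ≤ C * ε ^ m := by
  suffices H : ∀ k : ℕ, ∀ α : Fin n → ℕ, (∑ i, α i) = k → ∀ m : ℕ, ∃ C : ℝ, EvSmall fun ε =>
      (eLpNorm (pdm α (u ε)) p volume).toReal ≤ C * ε ^ m by
    exact fun α m => H (∑ i, α i) α rfl m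
  intro k
  induction k using Nat.strong_induction_on with
  | _ k IH =>
  intro α hk m
  rcases Nat.eq_zero_or_pos k with rfl | hkpos
  · have hα : α = fun _ => 0 := by
      funext j
      exact (Finset.sum_eq_zero_iff.mp hk) j (Finset.mem_univ j)
    subst hα
    obtain ⟨C, η, hη0, hη1, hC⟩ := hb m
    refine ⟨C, η, hη0, hη1, fun ε hε0 hεη => ?_⟩
    show (eLpNorm (pdm (fun _ => 0) (u ε)) p volume).toReal ≤ C * ε ^ m
    rw [pdm_zero]
    exact hC ε hε0 hεη
  · obtain ⟨i, hi0⟩ : ∃ i, α i ≠ 0 := by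
      by_contra hc
      push_neg at hc
      rw [Finset.sum_eq_zero fun j _ => hc j] at hk
      omega
    have hαi : 1 ≤ α i := Nat.one_le_iff_ne_zero.mpr hi0
    set γ : Fin n → ℕ := Function.update α i (α i - 1) with hγ
    have hαγ : γ + Pi.single i 1 = α := by
      funext j
      by_cases hji : j = i
      · subst hji
        simp only [Pi.add_apply, hγ, Function.update_self, Pi.single_eq_same]
        omega
      · simp [hγ, Function.update_of_ne hji, Pi.single_apply, hji]
    have hγsum : ∑ j, γ j = k - 1 := by
      have h1 : ∑ j, α j = α i + ∑ j ∈ Finset.univ.erase i, α j :=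
        (Finset.add_sum_erase _ _ (Finset.mem_univ i)).symm
      have h2 : ∑ j, γ j = γ i + ∑ j ∈ Finset.univ.erase i, γ j :=
        (Finset.add_sum_erase _ _ (Finset.mem_univ i)).symm
      have h3 : ∑ j ∈ Finset.univ.erase i, γ j = ∑ j ∈ Finset.univ.erase i, α j :=
        Finset.sum_congr rfl fun j hj => by
          rw [hγ, Function.update_of_ne (Finset.ne_of_mem_erase hj)]
      have h4 : γ i = α i - 1 := by rw [hγ, Function.update_self]
      omega
    obtain ⟨N, C2, η2, hη20, hη21, hC2⟩ := ha (α + Pi.single i 1)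
    obtain ⟨C1, η1, hη10, hη11, hC1⟩ := IH (k-1) (by omega) γ hγsum ((m + N) + m)
    refine ⟨2 * C1 + C2, min η1 η2, lt_min hη10 hη20,
      le_trans (min_le_left _ _) hη11, ?_⟩
    intro ε hε0 hεη
    have hεIoc : ε ∈ Set.Ioc (0:ℝ) 1 :=
      ⟨hε0, le_trans hεη (le_trans (min_le_left _ _) hη11)⟩
    have husm := hsmooth ε hεIoc
    have hgsm : ContDiff ℝ (⊤ : ℕ∞) (pdm γ (u ε)) := pdm_smooth γ husm
    have hh : (0:ℝ) < ε ^ (m + N) := pow_pos hε0 _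
    have hkey := key p hp (i := i) hgsm hh
    have hpd1 : pd i (pdm γ (u ε)) = pdm α (u ε) := by
      rw [pd_pdm γ husm, hαγ]
    have hpd2 : pd i (pd i (pdm γ (u ε))) = pdm (α + Pi.single i 1) (u ε) := by
      rw [hpd1, pd_pdm α husm]
    rw [hpd2, hpd1] at hkey
    have hfin0 : eLpNorm (pdm γ (u ε)) p volume ≠ ⊤ := (hfin ε hεIoc γ).ne
    have hfin2 : eLpNorm (pdm (α + Pi.single i 1) (u ε)) p volume ≠ ⊤ :=
      (hfin ε hεIoc _).ne
    have hRne : ENNReal.ofReal (2 / ε ^ (m + N)) * eLpNorm (pdm γ (u ε)) p volume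
        + ENNReal.ofReal (ε ^ (m + N)) * eLpNorm (pdm (α + Pi.single i 1) (u ε)) p volume
          ≠ ⊤ :=
      ENNReal.add_ne_top.2 ⟨ENNReal.mul_ne_top ENNReal.ofReal_ne_top hfin0,
        ENNReal.mul_ne_top ENNReal.ofReal_ne_top hfin2⟩
    have htr := ENNReal.toReal_mono hRne hkey
    rw [ENNReal.toReal_add (ENNReal.mul_ne_top ENNReal.ofReal_ne_top hfin0)
        (ENNReal.mul_ne_top ENNReal.ofReal_ne_top hfin2),
      ENNReal.toReal_mul, ENNReal.toReal_mul,
      ENNReal.toReal_ofReal (by positivity), ENNReal.toReal_ofReal (by positivity)] at htr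
    have hb1 : (eLpNorm (pdm γ (u ε)) p volume).toReal ≤ C1 * ε ^ ((m + N) + m) :=
      hC1 ε hε0 (le_trans hεη (min_le_left _ _))
    have hb2 : (eLpNorm (pdm (α + Pi.single i 1) (u ε)) p volume).toReal
        ≤ C2 * ε ^ (-(N:ℤ)) := hC2 ε hε0 (le_trans hεη (min_le_right _ _))
    calc (eLpNorm (pdm α (u ε)) p volume).toReal
        ≤ 2 / ε ^ (m + N) * (eLpNorm (pdm γ (u ε)) p volume).toReal
          + ε ^ (m + N) * (eLpNorm (pdm (α + Pi.single i 1) (u ε)) p volume).toReal := htr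
      _ ≤ 2 / ε ^ (m + N) * (C1 * ε ^ ((m + N) + m))
          + ε ^ (m + N) * (C2 * ε ^ (-(N:ℤ))) := by gcongr
      _ = (2 * C1 + C2) * ε ^ m := by
          have hne : ε ≠ 0 := hε0.ne'
          rw [zpow_neg, zpow_natCast]
          field_simp
          ring
end
end

section
/- Let Ω ⊆ ℝ^n be open, K ⊆ Ω compact, and (x_ε)_{ε∈(0,1]} a net of points of Ω with x_ε ∈ K for all sufficiently small ε. Let ψ ∈ C_c^∞(Ω) be identically 1 on a neighborhood of K, and let φ ∈ S(ℝ^n) satisfy ∫_{ℝ^n} φ(y) dy = 1 and ∫_{ℝ^n} y^α φ(y) dy = 0 for all multi-indices α ≠ 0. If (u_ε)_{ε∈(0,1]} is a regular-moderate net of smooth functions on Ω, then for every q ∈ ℕ there exists η ∈ (0,1] such that for all ε ∈ (0,η]: |u_ε(x_ε) − ∫_Ω u_ε(y) ψ(y) φ_ε(x_ε − y) dy| ≤ ε^q. -/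
open MeasureTheory
open scoped ENNReal

noncomputable section

/-- Partial derivative within a set `s`, in the `i`-th coordinate direction. -/
def pdOn {n : ℕ} (s : Set (Fin n → ℝ)) (i : Fin n) (f : (Fin n → ℝ) → ℂ) :
    (Fin n → ℝ) → ℂ :=
  fun x => fderivWithin ℝ f s x (Pi.single i 1)

/-- Multi-index partial derivative `∂^β` within a set `s`. -/
def pdmOn {n : ℕ} (s : Set (Fin n → ℝ)) (β : Fin n → ℕ) (f : (Fin n → ℝ) → ℂ) :
    (Fin n → ℝ) → ℂ :=
  (List.finRange n).foldr (fun i g => (pdOn s i)^[β i] g) f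

/-- A net of smooth functions on the open set `Ω` is regular-moderate if for every compact
`K ⊆ Ω` there is a single `N` such that for every multi-index `α`,
`sup_{x ∈ K} |∂^α u_ε(x)| = O(ε^{-N})` as `ε → 0`. -/
def RegMod {n : ℕ} (Ω : Set (Fin n → ℝ)) (u : ℝ → (Fin n → ℝ) → ℂ) : Prop :=
  ∀ K : Set (Fin n → ℝ), IsCompact K → K ⊆ Ω → ∃ N : ℕ, ∀ α : Fin n → ℕ, ∃ C : ℝ,
    EvSmall fun ε => ∀ x ∈ K, ‖pdmOn Ω α (u ε) x‖ ≤ C * ε ^ (-(N : ℤ))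

/- ### auxiliary definitions and lemmas -/

def eb {n : ℕ} (i : Fin n) : Fin n → ℝ := Pi.single i 1

def compPD {n : ℕ} (l : List (Fin n)) (f : (Fin n → ℝ) → ℂ) : (Fin n → ℝ) → ℂ :=
  l.foldr pd f

def cnt {n : ℕ} (l : List (Fin n)) : Fin n → ℕ := fun i => l.count i

def mulList {n : ℕ} (β : Fin n → ℕ) : List (Fin n) :=
  (List.finRange n).flatMap fun i => List.replicate (β i) i

lemma aux_compPD_append {n : ℕ} (l₁ l₂ : List (Fin n)) (f : (Fin n → ℝ) → ℂ) :
    compPD (l₁ ++ l₂) f = compPD l₁ (compPD l₂ f) :=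
  List.foldr_append

lemma aux_compPD_replicate {n : ℕ} (k : ℕ) (i : Fin n) (f : (Fin n → ℝ) → ℂ) :
    compPD (List.replicate k i) f = (pd i)^[k] f := by
  induction k with
  | zero => rfl
  | succ k ih =>
    rw [List.replicate_succ]
    show pd i (compPD (List.replicate k i) f) = _
    rw [ih, Function.iterate_succ_apply']

lemma aux_pdm_eq_compPD {n : ℕ} (β : Fin n → ℕ) (f : (Fin n → ℝ) → ℂ) :
    pdm β f = compPD (mulList β) f := by
  unfold pdm mulList
  induction List.finRange n with
  | nil => rfl
  | cons a L ih =>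
    rw [List.foldr_cons, List.flatMap_cons, aux_compPD_append, aux_compPD_replicate, ih]

lemma aux_count_flatMap_replicate {n : ℕ} (β : Fin n → ℕ) (i : Fin n) :
    ∀ L : List (Fin n), L.Nodup →
      ((L.flatMap fun j => List.replicate (β j) j).count i) = if i ∈ L then β i else 0 := by
  intro L
  induction L with
  | nil => simp
  | cons a L ih =>
    intro hnd
    rw [List.flatMap_cons, List.count_append, List.count_replicate,
      ih (List.nodup_cons.mp hnd).2]
    rcases eq_or_ne i a with rfl | hne
    · have : i ∉ L := (List.nodup_cons.mp hnd).1
      simp [this]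
    · simp [hne, Ne.symm hne, List.mem_cons]

lemma aux_count_mulList {n : ℕ} (β : Fin n → ℕ) (i : Fin n) :
    (mulList β).count i = β i := by
  rw [mulList, aux_count_flatMap_replicate β i _ (List.nodup_finRange n)]
  simp [List.mem_finRange]

lemma aux_perm_mulList {n : ℕ} (l : List (Fin n)) : l.Perm (mulList (cnt l)) := by
  rw [List.perm_iff_count]
  intro a
  rw [aux_count_mulList]
  rfl

lemma aux_prod_map_count {n : ℕ} (l : List (Fin n)) (z : Fin n → ℝ) :
    (l.map z).prod = monom (cnt l) z := by
  induction l with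
  | nil => simp [monom, cnt]
  | cons a l ih =>
    rw [List.map_cons, List.prod_cons, ih]
    unfold monom cnt
    have h1 : ∀ i : Fin n, (a :: l).count i = l.count i + if i = a then 1 else 0 := by
      intro i; rw [List.count_cons]
      congr 1
      by_cases h : i = a
      · simp [h]
      · rw [if_neg h, if_neg (by simpa [beq_iff_eq] using Ne.symm h)]
    calc z a * ∏ i, z i ^ l.count i
        = (∏ i, z i ^ l.count i) * ∏ i, (if i = a then z i else 1) := by
          rw [Finset.prod_ite_eq' Finset.univ a z]; simp [mul_comm]
      _ = ∏ i, z i ^ ((a :: l).count i) := by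
          rw [← Finset.prod_mul_distrib]
          refine Finset.prod_congr rfl fun i _ => ?_
          rw [h1 i, pow_add]
          by_cases h : i = a <;> simp [h]

lemma aux_prod_diag {n m : ℕ} (c : Fin m → Fin n) (z : Fin n → ℝ) :
    (∏ j, z (c j)) = monom (cnt (List.ofFn c)) z := by
  rw [← aux_prod_map_count, List.map_ofFn, List.prod_ofFn]
  rfl

lemma aux_monom_le {n : ℕ} (α : Fin n → ℕ) (z : Fin n → ℝ) :
    |monom α z| ≤ ‖z‖ ^ (∑ i, α i) := by
  rw [monom, Finset.abs_prod, ← Finset.prod_pow_eq_pow_sum]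
  refine Finset.prod_le_prod (fun i _ => abs_nonneg _) fun i _ => ?_
  rw [abs_pow]
  exact pow_le_pow_left₀ (abs_nonneg _) ((Real.norm_eq_abs _) ▸ norm_le_pi_norm z i) _

lemma aux_cnt_ofFn_ne_zero {n m : ℕ} (hm : m ≠ 0) (c : Fin m → Fin n) :
    cnt (List.ofFn c) ≠ 0 := by
  intro h
  have h0 := congrFun h (c ⟨0, Nat.pos_of_ne_zero hm⟩)
  have hmem : c ⟨0, Nat.pos_of_ne_zero hm⟩ ∈ List.ofFn c := by
    rw [List.mem_ofFn]; exact ⟨_, rfl⟩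
  rw [cnt] at h0
  simp only [Pi.zero_apply] at h0
  exact (List.count_eq_zero.mp h0) hmem

/- ### smoothness and commutation of partial derivatives on an open set -/

lemma auxTop (k : ℕ) : (k : WithTop ℕ∞) ≤ ((⊤:ℕ∞) : WithTop ℕ∞) := by
  exact_mod_cast (le_top : (k:ℕ∞) ≤ ⊤)

lemma aux_contDiffOn_pd {n : ℕ} {Ω : Set (Fin n → ℝ)} (hΩ : IsOpen Ω)
    {f : (Fin n → ℝ) → ℂ} (hf : ContDiffOn ℝ ((⊤:ℕ∞) : WithTop ℕ∞) f Ω) (i : Fin n) :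
    ContDiffOn ℝ ((⊤:ℕ∞) : WithTop ℕ∞) (pd i f) Ω := by
  have h1 : ContDiffOn ℝ ((⊤:ℕ∞) : WithTop ℕ∞) (fderiv ℝ f) Ω :=
    hf.fderiv_of_isOpen hΩ (by simp)
  exact h1.clm_apply contDiffOn_const

lemma aux_contDiffOn_compPD {n : ℕ} {Ω : Set (Fin n → ℝ)} (hΩ : IsOpen Ω)
    {f : (Fin n → ℝ) → ℂ} (hf : ContDiffOn ℝ ((⊤:ℕ∞) : WithTop ℕ∞) f Ω)
    (l : List (Fin n)) :
    ContDiffOn ℝ ((⊤:ℕ∞) : WithTop ℕ∞) (compPD l f) Ω := by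
  induction l with
  | nil => exact hf
  | cons a l ih => exact aux_contDiffOn_pd hΩ ih a

lemma aux_pd_congr_nhds {n : ℕ} {f g : (Fin n → ℝ) → ℂ} {x : Fin n → ℝ} (i : Fin n)
    (h : f =ᶠ[nhds x] g) : pd i f x = pd i g x := by
  unfold pd
  rw [h.fderiv_eq]

lemma aux_pd_comm {n : ℕ} {Ω : Set (Fin n → ℝ)} (hΩ : IsOpen Ω)
    {f : (Fin n → ℝ) → ℂ} (hf : ContDiffOn ℝ ((⊤:ℕ∞) : WithTop ℕ∞) f Ω)
    {x : Fin n → ℝ} (hx : x ∈ Ω) (i j : Fin n) :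
    pd i (pd j f) x = pd j (pd i f) x := by
  have hsym := (hf.contDiffAt (hΩ.mem_nhds hx)).isSymmSndFDerivAt
    (by rw [minSmoothness_of_isRCLikeNormedField]; exact_mod_cast auxTop 2)
  have h2 : ContDiffOn ℝ ((⊤:ℕ∞) : WithTop ℕ∞) (fderiv ℝ f) Ω :=
    hf.fderiv_of_isOpen hΩ (by simp)
  have hd : DifferentiableAt ℝ (fderiv ℝ f) x :=
    (h2.differentiableOn (by simp)).differentiableAt (hΩ.mem_nhds hx)
  have key : ∀ v w : Fin n → ℝ,
      fderiv ℝ (fun y => fderiv ℝ f y v) x w = fderiv ℝ (fderiv ℝ f) x w v := by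
    intro v w
    have hcomp := ((ContinuousLinearMap.apply ℝ ℂ v).hasFDerivAt.comp x hd.hasFDerivAt).fderiv
    have heq : (fun y => fderiv ℝ f y v) = (ContinuousLinearMap.apply ℝ ℂ v) ∘ (fderiv ℝ f) :=
      rfl
    rw [heq, hcomp]
    rfl
  show fderiv ℝ (fun y => fderiv ℝ f y (Pi.single j 1)) x (Pi.single i 1)
      = fderiv ℝ (fun y => fderiv ℝ f y (Pi.single i 1)) x (Pi.single j 1)
  rw [key, key]
  exact hsym _ _

lemma aux_compPD_perm {n : ℕ} {Ω : Set (Fin n → ℝ)} (hΩ : IsOpen Ω)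
    {f : (Fin n → ℝ) → ℂ} (hf : ContDiffOn ℝ ((⊤:ℕ∞) : WithTop ℕ∞) f Ω)
    {l l' : List (Fin n)} (hp : l.Perm l') :
    Set.EqOn (compPD l f) (compPD l' f) Ω := by
  induction hp with
  | nil => exact fun x _ => rfl
  | cons a h ih =>
    intro x hx
    exact aux_pd_congr_nhds a (ih.eventuallyEq_of_mem (hΩ.mem_nhds hx))
  | swap a b l =>
    intro x hx
    exact aux_pd_comm hΩ (aux_contDiffOn_compPD hΩ hf l) hx b a
  | trans h₁ h₂ ih₁ ih₂ => exact fun x hx => (ih₁ hx).trans (ih₂ hx)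

lemma aux_iterate_pdOn_eq {n : ℕ} {Ω : Set (Fin n → ℝ)} (hΩ : IsOpen Ω)
    {g₁ g₂ : (Fin n → ℝ) → ℂ} (h : Set.EqOn g₁ g₂ Ω) (i : Fin n) (k : ℕ) :
    Set.EqOn ((pdOn Ω i)^[k] g₁) ((pd i)^[k] g₂) Ω := by
  induction k with
  | zero => exact h
  | succ k ih =>
    intro x hx
    rw [Function.iterate_succ_apply', Function.iterate_succ_apply']
    show fderivWithin ℝ ((pdOn Ω i)^[k] g₁) Ω x (Pi.single i 1)
        = fderiv ℝ ((pd i)^[k] g₂) x (Pi.single i 1)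
    rw [fderivWithin_congr' ih hx, fderivWithin_of_isOpen hΩ hx]

lemma aux_pdmOn_eqOn_pdm {n : ℕ} {Ω : Set (Fin n → ℝ)} (hΩ : IsOpen Ω)
    (β : Fin n → ℕ) (f : (Fin n → ℝ) → ℂ) :
    Set.EqOn (pdmOn Ω β f) (pdm β f) Ω := by
  unfold pdmOn pdm
  induction List.finRange n with
  | nil => exact fun x _ => rfl
  | cons a L ih => exact aux_iterate_pdOn_eq hΩ ih a (β a)

lemma aux_iFDW_basis {n : ℕ} {Ω : Set (Fin n → ℝ)} (hΩ : IsOpen Ω) {m : ℕ}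
    {f : (Fin n → ℝ) → ℂ} (hf : ContDiffOn ℝ ((⊤:ℕ∞) : WithTop ℕ∞) f Ω)
    {x : Fin n → ℝ} (hx : x ∈ Ω) (c : Fin m → Fin n) :
    iteratedFDerivWithin ℝ m f Ω x (fun j => eb (c j)) = compPD (List.ofFn c) f x := by
  induction m generalizing f with
  | zero => simp [compPD]
  | succ m ih =>
    rw [iteratedFDerivWithin_succ_apply_right hΩ.uniqueDiffOn hx]
    rw [← iteratedFDerivWithin_clm_apply_const_apply hΩ.uniqueDiffOn
      (hf.fderivWithin hΩ.uniqueDiffOn (by simp)) (auxTop m) hx]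
    have heq : Set.EqOn (fun y => fderivWithin ℝ f Ω y (eb (c (Fin.last m))))
        (pd (c (Fin.last m)) f) Ω := by
      intro y hy
      show fderivWithin ℝ f Ω y (eb (c (Fin.last m))) = _
      rw [fderivWithin_of_isOpen hΩ hy]
      rfl
    rw [iteratedFDerivWithin_congr heq hx]
    have hinit : (Fin.init fun j : Fin (m+1) => eb (c j))
        = fun j : Fin m => eb ((c ∘ Fin.castSucc) j) := rfl
    rw [hinit, ih (aux_contDiffOn_pd hΩ hf _)]
    rw [List.ofFn_succ', List.concat_eq_append, aux_compPD_append]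
    rfl

lemma aux_multilinear_expand {n m : ℕ}
    (v : ContinuousMultilinearMap ℝ (fun _ : Fin m => (Fin n → ℝ)) ℂ)
    (w : Fin m → Fin n → ℝ) :
    v w = ∑ c : Fin m → Fin n, (∏ j, w j (c j)) • v (fun j => eb (c j)) := by
  have hw : ∀ j : Fin m, w j = ∑ i : Fin n, (w j i) • eb i := by
    intro j
    have : ∀ i : Fin n, (w j i) • eb i = Pi.single i (w j i) := by
      intro i
      rw [eb, ← Pi.single_smul, smul_eq_mul, mul_one]
    rw [funext this, Finset.univ_sum_single]
  calc v w = v (fun j => ∑ i : Fin n, (w j i) • eb i) := by rw [← funext hw]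
    _ = ∑ c : Fin m → Fin n, v (fun j => (w j (c j)) • eb (c j)) :=
        v.toMultilinearMap.map_sum (fun j i => (w j i) • eb i)
    _ = ∑ c : Fin m → Fin n, (∏ j, w j (c j)) • v (fun j => eb (c j)) := by
        refine Finset.sum_congr rfl fun c _ => ?_
        exact v.map_smul_univ (fun j => w j (c j)) (fun j => eb (c j))

lemma aux_norm_iFDW_le {n : ℕ} {Ω : Set (Fin n → ℝ)} (hΩ : IsOpen Ω) {m : ℕ}
    {f : (Fin n → ℝ) → ℂ} (hf : ContDiffOn ℝ ((⊤:ℕ∞) : WithTop ℕ∞) f Ω)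
    {x : Fin n → ℝ} (hx : x ∈ Ω) :
    ‖iteratedFDerivWithin ℝ m f Ω x‖
      ≤ ∑ c : Fin m → Fin n, ‖pdm (cnt (List.ofFn c)) f x‖ := by
  apply ContinuousMultilinearMap.opNorm_le_bound
    (Finset.sum_nonneg fun _ _ => norm_nonneg _)
  intro w
  rw [aux_multilinear_expand]
  refine (norm_sum_le _ _).trans ?_
  rw [Finset.sum_mul]
  refine Finset.sum_le_sum fun c _ => ?_
  rw [norm_smul]
  have h1 : iteratedFDerivWithin ℝ m f Ω x (fun j => eb (c j))
      = pdm (cnt (List.ofFn c)) f x := by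
    rw [aux_iFDW_basis hΩ hf hx c, aux_pdm_eq_compPD]
    exact aux_compPD_perm hΩ hf (aux_perm_mulList _) hx
  rw [h1, mul_comm]
  refine mul_le_mul_of_nonneg_left ?_ (norm_nonneg _)
  calc ‖∏ j, w j (c j)‖ = ∏ j, |w j (c j)| := by
        rw [Real.norm_eq_abs, Finset.abs_prod]
    _ ≤ ∏ j, ‖w j‖ := Finset.prod_le_prod (fun _ _ => abs_nonneg _)
        (fun j _ => (Real.norm_eq_abs _) ▸ norm_le_pi_norm (w j) (c j))

/- ### Taylor expansion along a line -/

lemma aux_lineDeriv {n : ℕ} {g : (Fin n → ℝ) → ℂ}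
    (hg : ContDiff ℝ ((⊤:ℕ∞) : WithTop ℕ∞) g) (x w : Fin n → ℝ) (k : ℕ) (t : ℝ) :
    iteratedDeriv k (fun s : ℝ => g (x + s • w)) t
      = iteratedFDeriv ℝ k g (x + t • w) (fun _ => w) := by
  induction k generalizing g with
  | zero => simp
  | succ k ih =>
    have hgfd : ContDiff ℝ ((⊤:ℕ∞) : WithTop ℕ∞) (fderiv ℝ g) :=
      hg.fderiv_right (by simp)
    have hgd : ContDiff ℝ ((⊤:ℕ∞) : WithTop ℕ∞) (fun y => fderiv ℝ g y w) :=
      hgfd.clm_apply contDiff_const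
    have hder : deriv (fun s' : ℝ => g (x + s' • w)) = fun s : ℝ => fderiv ℝ g (x + s • w) w := by
      funext s
      have hline : HasDerivAt (fun s' : ℝ => x + s' • w) w s := by
        simpa using ((hasDerivAt_id s).smul_const w).const_add x
      exact (((hg.differentiable (by simp)) _).hasFDerivAt.comp_hasDerivAt
        s hline).deriv
    rw [iteratedDeriv_succ', hder, ih hgd]
    rw [iteratedFDeriv_succ_apply_right]
    have hinit : Fin.init (fun _ : Fin (k+1) => w) = fun _ : Fin k => w := rfl
    rw [hinit]
    rw [iteratedFDeriv_clm_apply_const_apply (c := fun y => fderiv ℝ g y) hgfd (auxTop k)]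

lemma aux_iDW_icc {f : ℝ → ℂ} (h : ContDiff ℝ ((⊤:ℕ∞) : WithTop ℕ∞) f) (k : ℕ) {t : ℝ}
    (ht : t ∈ Set.Icc (0:ℝ) 1) :
    iteratedDerivWithin k f (Set.Icc 0 1) t = iteratedDeriv k f t := by
  rw [iteratedDerivWithin_eq_iteratedFDerivWithin, iteratedDeriv_eq_iteratedFDeriv]
  congr 1
  have h1 := contDiff_iff_ftaylorSeries.mp h
  have h2 := (hasFTaylorSeriesUpToOn_univ_iff.mpr h1).mono (Set.subset_univ (Set.Icc (0:ℝ) 1))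
  exact (h2.eq_iteratedFDerivWithin_of_uniqueDiffOn (auxTop k)
    (uniqueDiffOn_Icc one_pos) ht).symm

lemma aux_taylor_line {n : ℕ} {g : (Fin n → ℝ) → ℂ}
    (hg : ContDiff ℝ ((⊤:ℕ∞) : WithTop ℕ∞) g) (x w : Fin n → ℝ) (m' : ℕ) {B : ℝ}
    (hB : ∀ y, ‖iteratedFDeriv ℝ (m'+1) g y‖ ≤ B) :
    ‖g (x + w) - ∑ k ∈ Finset.range (m'+1),
        ((k.factorial : ℝ))⁻¹ • iteratedFDeriv ℝ k g x (fun _ => w)‖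
      ≤ B * ‖w‖^(m'+1) / m'.factorial := by
  set h : ℝ → ℂ := fun s => g (x + s • w) with hh
  have hhs : ContDiff ℝ ((⊤:ℕ∞) : WithTop ℕ∞) h :=
    hg.comp (contDiff_const.add (contDiff_id.smul contDiff_const))
  have hC : ∀ y ∈ Set.Icc (0:ℝ) 1,
      ‖iteratedDerivWithin (m'+1) h (Set.Icc 0 1) y‖ ≤ B * ‖w‖^(m'+1) := by
    intro y hy
    rw [aux_iDW_icc hhs _ hy, aux_lineDeriv hg x w (m'+1) y]
    refine ((iteratedFDeriv ℝ (m'+1) g (x + y • w)).le_opNorm _).trans ?_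
    have : (∏ _i : Fin (m'+1), ‖w‖) = ‖w‖^(m'+1) := by
      rw [Finset.prod_const, Finset.card_univ, Fintype.card_fin]
    rw [this]
    exact mul_le_mul_of_nonneg_right (hB _) (pow_nonneg (norm_nonneg _) _)
  have H := taylor_mean_remainder_bound (f := h) (a := 0) (b := 1) (x := 1) (n := m')
    zero_le_one ((hhs.of_le (by exact_mod_cast auxTop (m'+1))).contDiffOn.mono
      (Set.subset_univ _)) (by constructor <;> norm_num) hC
  have h1 : h 1 = g (x + w) := by simp [hh]
  have h2 : taylorWithinEval h m' (Set.Icc 0 1) 0 1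
      = ∑ k ∈ Finset.range (m'+1),
          ((k.factorial : ℝ))⁻¹ • iteratedFDeriv ℝ k g x (fun _ => w) := by
    rw [taylor_within_apply]
    refine Finset.sum_congr rfl fun k hk => ?_
    rw [aux_iDW_icc hhs k (by constructor <;> norm_num),
      aux_lineDeriv hg x w k 0]
    simp
  rw [h1, h2] at H
  calc ‖g (x + w) - ∑ k ∈ Finset.range (m'+1),
        ((k.factorial : ℝ))⁻¹ • iteratedFDeriv ℝ k g x (fun _ => w)‖
      ≤ B * ‖w‖^(m'+1) * (1 - 0) ^ (m'+1) / m'.factorial := H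
    _ = B * ‖w‖^(m'+1) / m'.factorial := by norm_num

/- ### EvSmall combinators -/

lemma aux_evSmall_and {P Q : ℝ → Prop} (hP : EvSmall P) (hQ : EvSmall Q) :
    EvSmall fun ε => P ε ∧ Q ε := by
  obtain ⟨η₁, h₁0, h₁1, h₁⟩ := hP
  obtain ⟨η₂, h₂0, h₂1, h₂⟩ := hQ
  exact ⟨min η₁ η₂, lt_min h₁0 h₂0, (min_le_left _ _).trans h₁1,
    fun ε hε0 hε => ⟨h₁ ε hε0 (hε.trans (min_le_left _ _)),
      h₂ ε hε0 (hε.trans (min_le_right _ _))⟩⟩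

lemma aux_evSmall_finset {ι : Type*} (s : Finset ι) (P : ι → ℝ → Prop)
    (h : ∀ i ∈ s, EvSmall (P i)) : EvSmall fun ε => ∀ i ∈ s, P i ε := by
  classical
  induction s using Finset.induction_on with
  | empty => exact ⟨1, one_pos, le_refl _, fun ε _ _ i hi => absurd hi (by simp)⟩
  | @insert a s hnotmem ih =>
    have h1 := h a (Finset.mem_insert_self a s)
    have h2 := ih (fun i hi => h i (Finset.mem_insert_of_mem hi))
    refine (aux_evSmall_and h1 h2).imp fun η ⟨hη0, hη1, hη⟩ => ⟨hη0, hη1, fun ε hε0 hε1 i hi => ?_⟩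
    rcases Finset.mem_insert.mp hi with rfl | hi
    · exact (hη ε hε0 hε1).1
    · exact (hη ε hε0 hε1).2 i hi

/- ### the localized function g ε = u ε * ψ -/

lemma aux_g_smooth {n : ℕ} {Ω : Set (Fin n → ℝ)} (hΩ : IsOpen Ω)
    {ψ : (Fin n → ℝ) → ℝ} (hψ : ContDiff ℝ ((⊤:ℕ∞) : WithTop ℕ∞) ψ)
    (hψΩ : tsupport ψ ⊆ Ω) {u : (Fin n → ℝ) → ℂ}
    (hu : ContDiffOn ℝ ((⊤:ℕ∞) : WithTop ℕ∞) u Ω) :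
    ContDiff ℝ ((⊤:ℕ∞) : WithTop ℕ∞) (fun y => u y * (ψ y : ℂ)) := by
  have hψc : ContDiff ℝ ((⊤:ℕ∞) : WithTop ℕ∞) (fun y => (ψ y : ℂ)) :=
    Complex.ofRealCLM.contDiff.comp hψ
  rw [contDiff_iff_contDiffAt]
  intro y
  by_cases hy : y ∈ Ω
  · exact (hu.mul hψc.contDiffOn).contDiffAt (hΩ.mem_nhds hy)
  · have hy' : y ∈ (tsupport ψ)ᶜ := fun hmem => hy (hψΩ hmem)
    have hev : (fun y => u y * (ψ y : ℂ)) =ᶠ[nhds y] (fun _ => 0) := by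
      filter_upwards [(isClosed_tsupport ψ).isOpen_compl.mem_nhds hy'] with z hz
      simp [image_eq_zero_of_notMem_tsupport hz]
    exact contDiffAt_const.congr_of_eventuallyEq hev

lemma aux_g_zero_deriv {n : ℕ} {ψ : (Fin n → ℝ) → ℝ} {u : (Fin n → ℝ) → ℂ}
    (m : ℕ) {y : Fin n → ℝ} (hy : y ∉ tsupport ψ) :
    iteratedFDeriv ℝ m (fun y => u y * (ψ y : ℂ)) y = 0 := by
  have hop : IsOpen (tsupport ψ)ᶜ := (isClosed_tsupport ψ).isOpen_compl
  have h1 := (iteratedFDerivWithin_of_isOpen (𝕜 := ℝ) (f := fun y => u y * (ψ y : ℂ)) m hop hy).symm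
  rw [h1, iteratedFDerivWithin_congr
    (f₁ := fun y => u y * (ψ y : ℂ)) (f := fun _ => (0:ℂ))
    (fun z hz => by simp [image_eq_zero_of_notMem_tsupport hz]) hy m]
  rw [iteratedFDerivWithin_of_isOpen m hop hy, iteratedFDeriv_zero_fun]
  rfl

lemma aux_uBound {n : ℕ} {Ω : Set (Fin n → ℝ)} (hΩ : IsOpen Ω)
    {L : Set (Fin n → ℝ)} (hL : IsCompact L) (hLΩ : L ⊆ Ω)
    {u : ℝ → (Fin n → ℝ) → ℂ}
    (hsmooth : ∀ ε ∈ Set.Ioc (0 : ℝ) 1, ContDiffOn ℝ (⊤ : ℕ∞) (u ε) Ω)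
    (hmod : RegMod Ω u) :
    ∃ N : ℕ, ∀ m : ℕ, ∃ C : ℝ, 0 ≤ C ∧ EvSmall fun ε =>
      ∀ y ∈ L, ‖iteratedFDerivWithin ℝ m (u ε) Ω y‖ ≤ C * ε ^ (-(N:ℤ)) := by
  obtain ⟨N, hN⟩ := hmod L hL hLΩ
  refine ⟨N, fun m => ?_⟩
  choose Cf hCf using hN
  classical
  have hev := aux_evSmall_finset Finset.univ
    (fun c : Fin m → Fin n => fun ε => ∀ x ∈ L,
      ‖pdmOn Ω (cnt (List.ofFn c)) (u ε) x‖ ≤ Cf (cnt (List.ofFn c)) * ε ^ (-(N:ℤ)))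
    (fun c _ => hCf (cnt (List.ofFn c)))
  obtain ⟨η, hη0, hη1, hη⟩ := hev
  refine ⟨∑ c : Fin m → Fin n, max (Cf (cnt (List.ofFn c))) 0,
    Finset.sum_nonneg fun _ _ => le_max_right _ _, η, hη0, hη1, fun ε hε0 hε1 y hy => ?_⟩
  have hεIoc : ε ∈ Set.Ioc (0:ℝ) 1 := ⟨hε0, hε1.trans hη1⟩
  have hu : ContDiffOn ℝ ((⊤:ℕ∞) : WithTop ℕ∞) (u ε) Ω :=
    (hsmooth ε hεIoc).of_le (by simp)
  refine (aux_norm_iFDW_le hΩ hu (hLΩ hy)).trans ?_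
  rw [Finset.sum_mul]
  refine Finset.sum_le_sum fun c hc => ?_
  have hper := hη ε hε0 hε1 c hc y hy
  calc ‖pdm (cnt (List.ofFn c)) (u ε) y‖
      = ‖pdmOn Ω (cnt (List.ofFn c)) (u ε) y‖ := by
        rw [aux_pdmOn_eqOn_pdm hΩ _ _ (hLΩ hy)]
    _ ≤ Cf (cnt (List.ofFn c)) * ε ^ (-(N:ℤ)) := hper
    _ ≤ max (Cf (cnt (List.ofFn c))) 0 * ε ^ (-(N:ℤ)) :=
        mul_le_mul_of_nonneg_right (le_max_left _ _) (zpow_nonneg hε0.le _)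

lemma aux_psiBound {n : ℕ} {ψ : (Fin n → ℝ) → ℝ}
    (hψ : ContDiff ℝ ((⊤:ℕ∞) : WithTop ℕ∞) ψ) (hψc : HasCompactSupport ψ) (m : ℕ) :
    ∃ D : ℝ, 0 ≤ D ∧ ∀ y, ‖iteratedFDeriv ℝ m (fun y => (ψ y : ℂ)) y‖ ≤ D := by
  have hψcC : ContDiff ℝ ((⊤:ℕ∞) : WithTop ℕ∞) (fun y => (ψ y : ℂ)) :=
    Complex.ofRealCLM.contDiff.comp hψ
  have hψcc : HasCompactSupport (fun y => (ψ y : ℂ)) :=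
    hψc.comp_left (g := fun r : ℝ => (r:ℂ)) (by simp)
  obtain ⟨D, hD⟩ := ((hψcC.continuous_iteratedFDeriv (auxTop m)).bounded_above_of_compact_support
    (hψcc.iteratedFDeriv m))
  exact ⟨max D 0, le_max_right _ _, fun y => (hD y).trans (le_max_left _ _)⟩

lemma aux_gBound {n : ℕ} {Ω : Set (Fin n → ℝ)} (hΩ : IsOpen Ω)
    {ψ : (Fin n → ℝ) → ℝ} (hψ : ContDiff ℝ ((⊤:ℕ∞) : WithTop ℕ∞) ψ)
    (hψc : HasCompactSupport ψ) (hψΩ : tsupport ψ ⊆ Ω)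
    {u : ℝ → (Fin n → ℝ) → ℂ}
    (hsmooth : ∀ ε ∈ Set.Ioc (0 : ℝ) 1, ContDiffOn ℝ (⊤ : ℕ∞) (u ε) Ω)
    (hmod : RegMod Ω u) :
    ∃ N : ℕ, ∀ m : ℕ, ∃ C : ℝ, 0 ≤ C ∧ EvSmall fun ε =>
      ∀ y, ‖iteratedFDeriv ℝ m (fun y => u ε y * (ψ y : ℂ)) y‖ ≤ C * ε ^ (-(N:ℤ)) := by
  have hψcC : ContDiffOn ℝ ((⊤:ℕ∞) : WithTop ℕ∞) (fun y => (ψ y : ℂ)) Ω :=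
    (Complex.ofRealCLM.contDiff.comp hψ).contDiffOn
  obtain ⟨N, hN⟩ := aux_uBound hΩ hψc (hψΩ : tsupport ψ ⊆ Ω) hsmooth hmod
  refine ⟨N, fun m => ?_⟩
  choose Ck hCk0 hCk using hN
  choose Dk hDk0 hDk using fun j => aux_psiBound hψ hψc j
  have hev := aux_evSmall_finset (Finset.range (m+1))
    (fun k => fun ε => ∀ y ∈ tsupport ψ,
      ‖iteratedFDerivWithin ℝ k (u ε) Ω y‖ ≤ Ck k * ε ^ (-(N:ℤ)))
    (fun k _ => hCk k)
  obtain ⟨η, hη0, hη1, hη⟩ := hev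
  set C : ℝ := ∑ k ∈ Finset.range (m+1), (m.choose k : ℝ) * Ck k * Dk (m - k) with hC
  have hC0 : 0 ≤ C :=
    Finset.sum_nonneg fun k _ => mul_nonneg (mul_nonneg (by positivity) (hCk0 k)) (hDk0 _)
  refine ⟨C, hC0, η, hη0, hη1, fun ε hε0 hε1 y => ?_⟩
  have hεIoc : ε ∈ Set.Ioc (0:ℝ) 1 := ⟨hε0, hε1.trans hη1⟩
  have hu : ContDiffOn ℝ ((⊤:ℕ∞) : WithTop ℕ∞) (u ε) Ω := (hsmooth ε hεIoc).of_le (by simp)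
  by_cases hy : y ∈ tsupport ψ
  · have hyΩ : y ∈ Ω := hψΩ hy
    have h1 : iteratedFDeriv ℝ m (fun y => u ε y * (ψ y : ℂ)) y
        = iteratedFDerivWithin ℝ m (fun y => u ε y * (ψ y : ℂ)) Ω y :=
      (iteratedFDerivWithin_of_isOpen m hΩ hyΩ).symm
    rw [h1]
    refine (norm_iteratedFDerivWithin_mul_le hu hψcC hΩ.uniqueDiffOn hyΩ (auxTop m)).trans ?_
    rw [hC, Finset.sum_mul]
    refine Finset.sum_le_sum fun k hk => ?_
    have h2 : ‖iteratedFDerivWithin ℝ (m-k) (fun y => (ψ y : ℂ)) Ω y‖ ≤ Dk (m-k) := by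
      rw [iteratedFDerivWithin_of_isOpen (m-k) hΩ hyΩ]
      exact hDk (m-k) y
    have h3 := hη ε hε0 hε1 k hk y hy
    calc (m.choose k : ℝ) * ‖iteratedFDerivWithin ℝ k (u ε) Ω y‖
          * ‖iteratedFDerivWithin ℝ (m-k) (fun y => (ψ y : ℂ)) Ω y‖
        ≤ (m.choose k : ℝ) * (Ck k * ε ^ (-(N:ℤ))) * Dk (m-k) := by
          exact mul_le_mul (mul_le_mul_of_nonneg_left h3 (by positivity)) h2
            (norm_nonneg _) (mul_nonneg (by positivity)
              (mul_nonneg (hCk0 k) (zpow_nonneg hε0.le _)))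
      _ = (m.choose k : ℝ) * Ck k * Dk (m-k) * ε ^ (-(N:ℤ)) := by ring
  · rw [aux_g_zero_deriv m hy]
    have : (0:ℝ) ≤ C * ε ^ (-(N:ℤ)) := by positivity
    simpa using this

/- ### integrals against the Schwartz function -/

lemma aux_cont_monom {n : ℕ} (α : Fin n → ℕ) : Continuous fun z : Fin n → ℝ => monom α z := by
  unfold monom
  exact continuous_finset_prod _ fun i _ => (continuous_apply i).pow _

lemma aux_intMonomPhi {n : ℕ} (φ : SchwartzMap (Fin n → ℝ) ℂ) (α : Fin n → ℕ) :
    Integrable (fun z => (monom α z : ℂ) * φ z) := by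
  refine Integrable.mono' (φ.integrable_pow_mul volume (∑ i, α i)) ?_ ?_
  · exact ((Complex.continuous_ofReal.comp (aux_cont_monom α)).mul
      φ.continuous).aestronglyMeasurable
  · refine Filter.Eventually.of_forall fun z => ?_
    rw [norm_mul, Complex.norm_real]
    exact mul_le_mul_of_nonneg_right (aux_monom_le α z) (norm_nonneg _)

lemma aux_expand_diag {n m : ℕ}
    (v : ContinuousMultilinearMap ℝ (fun _ : Fin m => (Fin n → ℝ)) ℂ) (z : Fin n → ℝ) :
    v (fun _ => z) = ∑ c : Fin m → Fin n,
      monom (cnt (List.ofFn c)) z • v (fun j => eb (c j)) := by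
  rw [aux_multilinear_expand v (fun _ => z)]
  exact Finset.sum_congr rfl fun c _ => by rw [aux_prod_diag]

lemma aux_term_eq {n : ℕ} (φ : SchwartzMap (Fin n → ℝ) ℂ) (A : ℂ) (α : Fin n → ℕ) :
    (fun z => (monom α z) • A * φ z) = fun z => A * ((monom α z : ℂ) * φ z) := by
  funext z
  rw [Complex.real_smul]
  ring

lemma aux_intMulti {n m : ℕ} (φ : SchwartzMap (Fin n → ℝ) ℂ)
    (v : ContinuousMultilinearMap ℝ (fun _ : Fin m => (Fin n → ℝ)) ℂ) :
    Integrable (fun z => v (fun _ => z) * φ z) := by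
  have heq : (fun z => v (fun _ => z) * φ z)
      = fun z => ∑ c : Fin m → Fin n,
          (monom (cnt (List.ofFn c)) z • v (fun j => eb (c j))) * φ z := by
    funext z
    rw [aux_expand_diag, Finset.sum_mul]
  rw [heq]
  refine integrable_finset_sum _ fun c _ => ?_
  rw [aux_term_eq]
  exact (aux_intMonomPhi φ _).const_mul _

lemma aux_momIntZero {n : ℕ} (φ : SchwartzMap (Fin n → ℝ) ℂ)
    (hφmom : ∀ α : Fin n → ℕ, α ≠ 0 → (∫ y, (monom α y : ℂ) * φ y) = 0)
    {m : ℕ} (hm : m ≠ 0)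
    (v : ContinuousMultilinearMap ℝ (fun _ : Fin m => (Fin n → ℝ)) ℂ) :
    ∫ z, v (fun _ => z) * φ z = 0 := by
  have heq : (fun z => v (fun _ => z) * φ z)
      = fun z => ∑ c : Fin m → Fin n,
          v (fun j => eb (c j)) * ((monom (cnt (List.ofFn c)) z : ℂ) * φ z) := by
    funext z
    rw [aux_expand_diag, Finset.sum_mul]
    exact Finset.sum_congr rfl fun c _ => by rw [Complex.real_smul]; ring
  rw [heq, integral_finset_sum _
    (fun c _ => (aux_intMonomPhi φ _).const_mul _)]
  refine Finset.sum_eq_zero fun c _ => ?_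
  rw [MeasureTheory.integral_const_mul, hφmom _ (aux_cnt_ofFn_ne_zero hm c), mul_zero]

set_option maxHeartbeats 2000000

/-- point values of regular-moderate nets are given, up to an `O(ε^q)` error
for every `q`, by the integral against `ψ(y) φ_ε(x_ε − y)`. -/
theorem stmt3 {n : ℕ} (Ω : Set (Fin n → ℝ)) (hΩ : IsOpen Ω)
    (K : Set (Fin n → ℝ)) (hK : IsCompact K) (hKΩ : K ⊆ Ω)
    (x : ℝ → Fin n → ℝ) (hxΩ : ∀ ε ∈ Set.Ioc (0 : ℝ) 1, x ε ∈ Ω)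
    (hxK : EvSmall fun ε => x ε ∈ K)
    (ψ : (Fin n → ℝ) → ℝ) (hψ : ContDiff ℝ (⊤ : ℕ∞) ψ) (hψc : HasCompactSupport ψ)
    (hψΩ : tsupport ψ ⊆ Ω)
    (hψ1 : ∃ U : Set (Fin n → ℝ), IsOpen U ∧ K ⊆ U ∧ ∀ y ∈ U, ψ y = 1)
    (φ : SchwartzMap (Fin n → ℝ) ℂ) (hφ1 : (∫ y, φ y) = 1)
    (hφmom : ∀ α : Fin n → ℕ, α ≠ 0 → (∫ y, (monom α y : ℂ) * φ y) = 0)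
    (u : ℝ → (Fin n → ℝ) → ℂ)
    (hsmooth : ∀ ε ∈ Set.Ioc (0 : ℝ) 1, ContDiffOn ℝ (⊤ : ℕ∞) (u ε) Ω)
    (hmod : RegMod Ω u) :
    ∀ q : ℕ, ∃ η : ℝ, 0 < η ∧ η ≤ 1 ∧ ∀ ε : ℝ, 0 < ε → ε ≤ η →
      ‖u ε (x ε) -
        ∫ y in Ω, u ε y * (ψ y : ℂ) * ((ε ^ n : ℝ)⁻¹ • φ (ε⁻¹ • (x ε - y)))‖ ≤ ε ^ q := by
  intro q
  have hψ' : ContDiff ℝ ((⊤:ℕ∞) : WithTop ℕ∞) ψ := hψ.of_le (by simp)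
  obtain ⟨N, hN⟩ := aux_gBound hΩ hψ' hψc hψΩ hsmooth hmod
  set m' : ℕ := N + q with hm'
  obtain ⟨C₁, hC₁0, η₁, hη₁0, hη₁1, hbd⟩ := hN (m'+1)
  obtain ⟨η₀, hη₀0, hη₀1, hx₀⟩ := hxK
  obtain ⟨U, hUopen, hKU, hU1⟩ := hψ1
  set Mφ : ℝ := ∫ z, ‖z‖^(m'+1) * ‖φ z‖ with hMφ
  have hMφ0 : 0 ≤ Mφ := integral_nonneg fun z => mul_nonneg (by positivity) (norm_nonneg _)
  set C₂ : ℝ := C₁ * Mφ / m'.factorial with hC₂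
  have hC₂0 : 0 ≤ C₂ := by positivity
  refine ⟨min (min η₀ η₁) (min 1 (C₂+1)⁻¹), by positivity,
    le_trans (min_le_right _ _) (min_le_left _ _), fun ε hε0 hεle => ?_⟩
  have hεη₀ : ε ≤ η₀ := hεle.trans ((min_le_left _ _).trans (min_le_left _ _))
  have hεη₁ : ε ≤ η₁ := hεle.trans ((min_le_left _ _).trans (min_le_right _ _))
  have hε1 : ε ≤ 1 := hεle.trans ((min_le_right _ _).trans (min_le_left _ _))
  have hεC : ε ≤ (C₂+1)⁻¹ := hεle.trans ((min_le_right _ _).trans (min_le_right _ _))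
  have hεIoc : ε ∈ Set.Ioc (0:ℝ) 1 := ⟨hε0, hε1⟩
  set g : (Fin n → ℝ) → ℂ := fun y => u ε y * (ψ y : ℂ) with hg
  have hgsm : ContDiff ℝ ((⊤:ℕ∞) : WithTop ℕ∞) g :=
    aux_g_smooth hΩ hψ' hψΩ ((hsmooth ε hεIoc).of_le (by simp))
  have hB : ∀ y, ‖iteratedFDeriv ℝ (m'+1) g y‖ ≤ C₁ * ε ^ (-(N:ℤ)) := hbd ε hε0 hεη₁
  have hxεK : x ε ∈ K := hx₀ ε hε0 hεη₀
  have hval : g (x ε) = u ε (x ε) := by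
    rw [hg]
    show u ε (x ε) * ((ψ (x ε) : ℝ) : ℂ) = u ε (x ε)
    rw [hU1 _ (hKU hxεK)]
    simp
  -- transform the integral
  set F : (Fin n → ℝ) → ℂ := fun w => g (x ε - w) * ((ε ^ n : ℝ)⁻¹ • φ (ε⁻¹ • w)) with hF
  set J : ℂ := ∫ z, g (x ε - ε • z) * φ z with hJ
  have hstep1 : (∫ y in Ω, u ε y * (ψ y : ℂ) * ((ε ^ n : ℝ)⁻¹ • φ (ε⁻¹ • (x ε - y))))
      = ∫ y, F (x ε - y) := by
    have h0 : ∀ y ∉ Ω, u ε y * (ψ y : ℂ) * ((ε ^ n : ℝ)⁻¹ • φ (ε⁻¹ • (x ε - y))) = 0 := by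
      intro y hy
      have hψy : ψ y = 0 := image_eq_zero_of_notMem_tsupport fun hmem => hy (hψΩ hmem)
      rw [hψy]
      simp
    rw [setIntegral_eq_integral_of_forall_compl_eq_zero h0]
    congr 1
    funext y
    rw [hF]
    show u ε y * (ψ y : ℂ) * ((ε ^ n : ℝ)⁻¹ • φ (ε⁻¹ • (x ε - y)))
        = g (x ε - (x ε - y)) * ((ε ^ n : ℝ)⁻¹ • φ (ε⁻¹ • (x ε - y)))
    rw [sub_sub_cancel, hg]
  have hstep2 : (∫ y, F (x ε - y)) = ∫ w, F w := integral_sub_left_eq_self F volume (x ε)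
  have hstep3 : (∫ w, F w) = J := by
    have hcs := MeasureTheory.Measure.integral_comp_smul (volume : Measure (Fin n → ℝ)) F ε
    rw [Module.finrank_fin_fun, abs_of_pos (by positivity : (0:ℝ) < (ε^n)⁻¹)] at hcs
    have hFε : ∀ z, F (ε • z) = (ε ^ n : ℝ)⁻¹ • (g (x ε - ε • z) * φ z) := by
      intro z
      rw [hF]
      show g (x ε - ε • z) * ((ε ^ n : ℝ)⁻¹ • φ (ε⁻¹ • ε • z)) = _
      rw [smul_smul, inv_mul_cancel₀ hε0.ne', one_smul, mul_smul_comm]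
    have h4 : (∫ z, F (ε • z)) = (ε ^ n : ℝ)⁻¹ • J := by
      rw [show (fun z => F (ε • z)) = fun z => (ε ^ n : ℝ)⁻¹ • (g (x ε - ε • z) * φ z)
        from funext hFε, integral_smul, hJ]
    exact smul_right_injective ℂ (inv_ne_zero (pow_ne_zero n hε0.ne')) (hcs.symm.trans h4)
  rw [hstep1, hstep2, hstep3, ← hval]
  -- g is bounded with compact support
  have hψcc : HasCompactSupport (fun y => (ψ y : ℂ)) :=
    hψc.comp_left (g := fun r : ℝ => (r:ℂ)) (by simp)
  have hgcs : HasCompactSupport g := HasCompactSupport.mul_left hψcc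
  obtain ⟨B₀, hB₀⟩ := hgsm.continuous.bounded_above_of_compact_support hgcs
  have hint1 : Integrable (fun z => g (x ε) * φ z) := (φ.integrable (μ := volume)).const_mul _
  have hcont2 : Continuous fun z : Fin n → ℝ => g (x ε - ε • z) :=
    hgsm.continuous.comp (continuous_const.sub (continuous_id.const_smul ε))
  have hint2 : Integrable (fun z => g (x ε - ε • z) * φ z) := by
    refine Integrable.mono' (((φ.integrable (μ := volume)).norm.const_mul B₀))
      ((hcont2.mul φ.continuous).aestronglyMeasurable)
      (Filter.Eventually.of_forall fun z => ?_)
    rw [norm_mul]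
    exact mul_le_mul_of_nonneg_right (hB₀ _) (norm_nonneg _)
  -- Taylor decomposition
  set w : (Fin n → ℝ) → (Fin n → ℝ) := fun z => -(ε • z) with hw
  set T : ℕ → (Fin n → ℝ) → ℂ := fun k z =>
    ((k.factorial : ℝ))⁻¹ • iteratedFDeriv ℝ k g (x ε) (fun _ => w z) with hT
  set R : (Fin n → ℝ) → ℂ := fun z =>
    g (x ε + w z) - ∑ k ∈ Finset.range (m'+1), T k z with hR
  have hsub : ∀ z : Fin n → ℝ, x ε - ε • z = x ε + w z := fun z => by
    rw [hw, sub_eq_add_neg]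
  have hT0 : ∀ z, T 0 z = g (x ε) := fun z => by simp [hT]
  have hTphi : ∀ (k : ℕ) (z), T k z * φ z = ((k.factorial : ℝ)⁻¹ * (-ε)^k) •
      ((iteratedFDeriv ℝ k g (x ε)) (fun _ => z) * φ z) := by
    intro k z
    have h5 : (fun _ : Fin k => w z) = fun _ : Fin k => (-ε) • z := by
      funext i
      rw [hw, neg_smul]
    rw [hT]
    show (((k.factorial : ℝ))⁻¹ • iteratedFDeriv ℝ k g (x ε) (fun _ => w z)) * φ z = _
    rw [h5, (iteratedFDeriv ℝ k g (x ε)).map_smul_univ (fun _ => (-ε)) (fun _ => z),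
      Finset.prod_const, Finset.card_univ, Fintype.card_fin, smul_smul, smul_mul_assoc]
  have hintT : ∀ k : ℕ, Integrable (fun z => T k z * φ z) := by
    intro k
    rw [show (fun z => T k z * φ z) = fun z => ((k.factorial : ℝ)⁻¹ * (-ε)^k) •
      ((iteratedFDeriv ℝ k g (x ε)) (fun _ => z) * φ z) from funext (hTphi k)]
    exact (aux_intMulti φ (iteratedFDeriv ℝ k g (x ε))).smul ((k.factorial : ℝ)⁻¹ * (-ε)^k)
  have hintSum : Integrable (fun z => ∑ k ∈ Finset.range (m'+1), T k z * φ z) :=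
    integrable_finset_sum _ fun k _ => hintT k
  have hintR : Integrable (fun z => R z * φ z) := by
    rw [show (fun z => R z * φ z) = fun z =>
        g (x ε - ε • z) * φ z - ∑ k ∈ Finset.range (m'+1), T k z * φ z by
      funext z
      rw [hR]
      show (g (x ε + w z) - ∑ k ∈ Finset.range (m'+1), T k z) * φ z = _
      rw [sub_mul, Finset.sum_mul, hsub z]]
    exact hint2.sub hintSum
  have hTint0 : ∀ k ∈ Finset.range m', (∫ z, T (k+1) z * φ z) = 0 := by
    intro k _
    rw [show (fun z => T (k+1) z * φ z) = fun z => (((k+1).factorial : ℝ)⁻¹ * (-ε)^(k+1)) •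
      ((iteratedFDeriv ℝ (k+1) g (x ε)) (fun _ => z) * φ z) from funext (hTphi (k+1))]
    rw [integral_smul, aux_momIntZero φ hφmom (Nat.succ_ne_zero k) _, smul_zero]
  have hmain : g (x ε) - J = -∫ z, R z * φ z := by
    have h6 : g (x ε) = ∫ z, g (x ε) * φ z := by
      rw [MeasureTheory.integral_const_mul, hφ1, mul_one]
    rw [hJ]
    conv_lhs => rw [h6]
    rw [← integral_sub hint1 hint2]
    have h7 : (fun z => g (x ε) * φ z - g (x ε - ε • z) * φ z)
        = fun z => (∑ k ∈ Finset.range m', -(T (k+1) z * φ z)) + -(R z * φ z) := by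
      funext z
      have h8 : g (x ε - ε • z) = R z + ∑ k ∈ Finset.range (m'+1), T k z := by
        rw [hsub z, hR]
        ring
      have h9 : (∑ k ∈ Finset.range (m'+1), T k z)
          = (∑ k ∈ Finset.range m', T (k+1) z) + g (x ε) := by
        rw [Finset.sum_range_succ', hT0 z]
      have h10 : (∑ k ∈ Finset.range m', -(T (k+1) z * φ z))
          = -((∑ k ∈ Finset.range m', T (k+1) z) * φ z) := by
        rw [Finset.sum_mul, ← Finset.sum_neg_distrib]
      rw [h8, h9, h10]
      ring
    have hnegT : ∀ k : ℕ, Integrable fun z => -(T k z * φ z) := fun k => (hintT k).neg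
    have hnegR : Integrable fun z => -(R z * φ z) := hintR.neg
    rw [h7, integral_add (integrable_finset_sum _ fun k hk => hnegT (k+1)) hnegR,
      integral_finset_sum _ (fun k hk => hnegT (k+1))]
    have h11 : ∀ k ∈ Finset.range m', (∫ z, -(T (k+1) z * φ z)) = 0 := fun k hk => by
      rw [integral_neg, hTint0 k hk, neg_zero]
    rw [Finset.sum_congr rfl h11, Finset.sum_const_zero, zero_add, integral_neg]
  rw [hmain, norm_neg]
  -- remainder estimate
  have hRbound : ∀ z, ‖R z‖ ≤ (C₁ * ε ^ (-(N:ℤ))) * ‖w z‖^(m'+1) / m'.factorial := by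
    intro z
    rw [hR]
    exact aux_taylor_line hgsm (x ε) (w z) m' hB
  have hwz : ∀ z, ‖w z‖ = ε * ‖z‖ := fun z => by
    rw [hw]
    show ‖-(ε • z)‖ = ε * ‖z‖
    rw [norm_neg, norm_smul, Real.norm_eq_abs, abs_of_pos hε0]
  have hnorm : ‖∫ z, R z * φ z‖ ≤ (C₁ * ε ^ (-(N:ℤ)) * ε^(m'+1) / m'.factorial) * Mφ := by
    refine (norm_integral_le_integral_norm _).trans ?_
    have hint4 : Integrable (fun z : Fin n → ℝ =>
        (C₁ * ε ^ (-(N:ℤ)) * ε^(m'+1) / m'.factorial) * (‖z‖^(m'+1) * ‖φ z‖)) :=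
      (φ.integrable_pow_mul volume (m'+1)).const_mul _
    refine le_trans (integral_mono hintR.norm hint4 fun z => ?_) ?_
    · rw [norm_mul]
      calc ‖R z‖ * ‖φ z‖
          ≤ ((C₁ * ε ^ (-(N:ℤ))) * ‖w z‖^(m'+1) / m'.factorial) * ‖φ z‖ :=
            mul_le_mul_of_nonneg_right (hRbound z) (norm_nonneg _)
        _ = (C₁ * ε ^ (-(N:ℤ)) * ε^(m'+1) / m'.factorial) * (‖z‖^(m'+1) * ‖φ z‖) := by
            rw [hwz z, mul_pow]
            ring
    · rw [MeasureTheory.integral_const_mul]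
  refine hnorm.trans ?_
  have hpow : ε ^ (-(N:ℤ)) * ε^(m'+1) = ε^(q+1) := by
    rw [zpow_neg, zpow_natCast]
    rw [show ε^(m'+1) = ε^N * ε^(q+1) by rw [hm', Nat.add_assoc, pow_add]]
    rw [← mul_assoc, inv_mul_cancel₀ (pow_ne_zero _ hε0.ne'), one_mul]
  have heq2 : C₁ * ε ^ (-(N:ℤ)) * ε^(m'+1) / m'.factorial * Mφ = C₂ * ε^(q+1) := by
    rw [hC₂, mul_assoc C₁, hpow]
    ring
  rw [heq2, pow_succ]
  calc C₂ * (ε^q * ε) = (C₂ * ε) * ε^q := by ring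
    _ ≤ 1 * ε^q := by
      refine mul_le_mul_of_nonneg_right ?_ (pow_nonneg hε0.le _)
      refine (mul_le_mul_of_nonneg_left hεC hC₂0).trans ?_
      rw [← div_eq_mul_inv]
      exact (div_le_one (by linarith)).mpr (by linarith)
    _ = ε^q := one_mul _
end
end
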